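/- If Δ is a simplicial complex on n vertices that is not the boundary of a simplex, then Δ is the Scarf complex of the ideal J'_Δ = (m'_1,…,m'_n). -/

import Mathlib

noncomputable section
attribute [local instance] Classical.propDecidable

/-- The simplicial complex generated by a set of faces: all nonempty subsets. -/
def gen {V : Type} (S : Finset (Finset V)) : Finset (Finset V) :=
  S.biUnion fun F => F.powerset.filter (· ≠ ∅)

/-- The facets (maximal faces) of a complex given by its finite set of faces. -/
def facets {V : Type} (Δ : Finset (Finset V)) : Finset (Finset V) :=
  Δ.filter fun F => ∀ G ∈ Δ, F ⊆ G → F = G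

/-- A (finite, abstract) simplicial complex: nonempty faces, closed under nonempty subsets. -/
def IsComplex {V : Type} (Δ : Finset (Finset V)) : Prop :=
  ∅ ∉ Δ ∧ ∀ F ∈ Δ, ∀ G, G ⊆ F → G ≠ ∅ → G ∈ Δ

/-- `F` is a leaf of `Δ`: `F` is a facet which is either the only facet, or
there is another facet `G` (a joint) with `F ∩ (Δ ∖ F) ⊆ G`, i.e. the
intersection of `F` with any other facet is contained in `G`. -/
def IsLeaf {V : Type} (Δ : Finset (Finset V)) (F : Finset V) : Prop :=
  F ∈ facets Δ ∧ (facets Δ = {F} ∨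
    ∃ G ∈ facets Δ, G ≠ F ∧ ∀ H ∈ facets Δ, H ≠ F → F ∩ H ⊆ G)

def HasLeaf {V : Type} (Δ : Finset (Finset V)) : Prop := ∃ F, IsLeaf Δ F

/-- A forest: every nonempty subcollection (complex generated by a subset of the
facets) has a leaf. -/
def IsForest {V : Type} (Δ : Finset (Finset V)) : Prop :=
  ∀ S ⊆ facets Δ, S.Nonempty → HasLeaf (gen S)

/-- Vertex set of a complex. -/
def vtx {V : Type} (Δ : Finset (Finset V)) : Finset V := Δ.sup id

/-- Connectedness: nonempty, and any two vertices are joined by a chain of faces. -/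
def Conn {V : Type} (Δ : Finset (Finset V)) : Prop :=
  Δ.Nonempty ∧ ∀ u ∈ vtx Δ, ∀ v ∈ vtx Δ,
    Relation.ReflTransGen (fun a b => ∃ σ ∈ Δ, a ∈ σ ∧ b ∈ σ) u v

/-- A simplicial tree is a connected forest. -/
def IsTree {V : Type} (Δ : Finset (Finset V)) : Prop := Conn Δ ∧ IsForest Δ

/-! Monomials in the variables `x_σ`, indexed by the nonempty faces `σ` of a complex
`Δ`.  All monomials arising in the Peeva–Velasco construction and its refinement are
squarefree, so we represent a squarefree monomial by its finite set of variables
(a `Finset` of faces); then divisibility is `⊆`, lcm is `∪`, and a product of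
monomials with disjoint supports is `∪`. -/

/-- The Peeva–Velasco generator `m_v = ∏_{σ ∈ Δ, v ∉ σ} x_σ`. -/
def mPV {V : Type} (Δ : Finset (Finset V)) (v : V) : Finset (Finset V) :=
  Δ.filter fun σ => v ∉ σ

/-- `A_Δ(v)`: the facets of `Δ` not containing `v`. -/
def AF {V : Type} (Δ : Finset (Finset V)) (v : V) : Finset (Finset V) :=
  (facets Δ).filter fun F => v ∉ F

/-- `B_Δ(v)`: the facets of `Δ` containing `v`. -/
def BF {V : Type} (Δ : Finset (Finset V)) (v : V) : Finset (Finset V) :=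
  (facets Δ).filter fun F => v ∈ F

/-- The refined generator `m'_v`: the squarefree product of the variables
`x_{G∖{v}}` for facets `G ∋ v`, the variables `x_F` for facets `F ∌ v`, and the
variables `x_σ` for maximal proper (nonempty) faces `σ` of such facets `F`. -/
def mPV' {V : Type} (Δ : Finset (Finset V)) (v : V) : Finset (Finset V) :=
  ((BF Δ v).image (fun G => G.erase v)).filter (· ≠ ∅) ∪ AF Δ v ∪
    (AF Δ v).biUnion fun F => F.powerset.filter fun σ => σ.card + 1 = F.card ∧ σ ≠ ∅

/-- `Δ` is the boundary of the full simplex on its `n` vertices: all proper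
nonempty subsets of the vertex set. -/
def IsBoundaryOfFullSimplex {n : ℕ} (Δ : Finset (Finset (Fin n))) : Prop :=
  Δ = (Finset.univ : Finset (Fin n)).powerset.filter
        fun s => s ≠ ∅ ∧ s ≠ Finset.univ

/-! The variables dividing `m'_v` are exactly the facets and ridges (nonempty facets minus a
vertex) of `Δ` that avoid `v`, so the `m'`-label of `τ` is the set of facets and ridges not
containing `τ`, just as its `m`-label is the set of faces not containing `τ`. Two subsets
therefore have equal `m'`-labels iff they lie in the same facets and ridges, and equal
`m`-labels iff they lie in the same faces. These conditions agree, so `J'_Δ` and `J_Δ` have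
the same Scarf complex, which is `Δ` by Peeva–Velasco. -/

def IsRidge {V : Type} (Δ : Finset (Finset V)) (ρ : Finset V) : Prop :=
  ρ.Nonempty ∧ ∃ a ∉ ρ, insert a ρ ∈ facets Δ

section

variable {V : Type} {Δ : Finset (Finset V)}

lemma mem_of_mem_facets {F : Finset V} (hF : F ∈ facets Δ) : F ∈ Δ :=
  (Finset.mem_filter.1 hF).1

lemma exists_mem_facets_superset {ρ : Finset V} (hρ : ρ ∈ Δ) :
    ∃ F ∈ facets Δ, ρ ⊆ F := by
  obtain ⟨F, hρF, hF⟩ := Δ.exists_le_maximal hρ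
  exact ⟨F, Finset.mem_filter.2 ⟨hF.1, fun G hG hFG => le_antisymm hFG (hF.2 hG hFG)⟩, hρF⟩

lemma IsComplex.mem_of_isRidge (hΔ : IsComplex Δ) {ρ : Finset V} (hρ : IsRidge Δ ρ) :
    ρ ∈ Δ := by
  obtain ⟨hne, a, -, ha⟩ := hρ
  exact hΔ.2 _ (mem_of_mem_facets ha) ρ (Finset.subset_insert a ρ) hne.ne_empty

lemma mem_mPV' {v : V} {ρ : Finset V} :
    ρ ∈ mPV' Δ v ↔ (ρ ∈ facets Δ ∨ IsRidge Δ ρ) ∧ v ∉ ρ := by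
  simp only [mPV', BF, AF, IsRidge, Finset.mem_union, Finset.mem_filter, Finset.mem_image,
    Finset.mem_biUnion, Finset.mem_powerset, ← Finset.nonempty_iff_ne_empty]
  constructor
  · rintro ((⟨⟨G, ⟨hG, hvG⟩, rfl⟩, hne⟩ | ⟨hF, hv⟩) | ⟨F, ⟨hF, hvF⟩, hsub, hcard, hne⟩)
    · exact ⟨Or.inr ⟨hne, v, Finset.notMem_erase v G, by rwa [Finset.insert_erase hvG]⟩,
        Finset.notMem_erase v G⟩
    · exact ⟨Or.inl hF, hv⟩
    · obtain ⟨a, ha, rfl⟩ := Finset.exists_eq_insert_iff.2 ⟨hsub, hcard⟩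
      exact ⟨Or.inr ⟨hne, a, ha, hF⟩, fun hv => hvF (Finset.mem_insert_of_mem hv)⟩
  · rintro ⟨hF | ⟨hne, a, ha, hF⟩, hv⟩
    · exact Or.inl (Or.inr ⟨hF, hv⟩)
    · by_cases hva : v = a
      · subst hva
        exact Or.inl (Or.inl ⟨⟨_, ⟨hF, Finset.mem_insert_self v ρ⟩, Finset.erase_insert ha⟩, hne⟩)
      · obtain ⟨hsub, hcard⟩ := Finset.exists_eq_insert_iff.1 ⟨a, ha, rfl⟩
        refine Or.inr ⟨_, ⟨hF, ?_⟩, hsub, hcard, hne⟩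
        simpa [Finset.mem_insert, hva] using hv

/-- If `τ ⊆ ρ ⊆ F` with `F` a facet and `w ∈ F ∖ ρ`, then `τ` lies in the ridge `F.erase w`. -/
lemma IsComplex.subset_of_forall_facet_or_ridge (hΔ : IsComplex Δ) {τ σ : Finset V}
    (h : ∀ ρ, ρ ∈ facets Δ ∨ IsRidge Δ ρ → τ ⊆ ρ → σ ⊆ ρ) {ρ : Finset V} (hρ : ρ ∈ Δ)
    (hτρ : τ ⊆ ρ) : σ ⊆ ρ := by
  obtain ⟨F, hF, hρF⟩ := exists_mem_facets_superset hρ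
  have hσF : σ ⊆ F := h F (Or.inl hF) (hτρ.trans hρF)
  intro w hwσ
  by_contra hwρ
  have hwF : w ∈ F := hσF hwσ
  have hρR : ρ ⊆ F.erase w := Finset.subset_erase.2 ⟨hρF, hwρ⟩
  have hR : IsRidge Δ (F.erase w) :=
    ⟨(Finset.nonempty_iff_ne_empty.2 fun h => hΔ.1 (h ▸ hρ)).mono hρR, w,
      Finset.notMem_erase w F, by rwa [Finset.insert_erase hwF]⟩
  exact Finset.notMem_erase w F (h _ (Or.inr hR) (hτρ.trans hρR) hwσ)

variable [DecidableEq V]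

lemma mem_biUnion_mPV {τ ρ : Finset V} : ρ ∈ τ.biUnion (mPV Δ) ↔ ρ ∈ Δ ∧ ¬ τ ⊆ ρ := by
  simp only [Finset.mem_biUnion, mPV, Finset.mem_filter, Finset.not_subset]
  exact ⟨fun ⟨a, ha, hρ, hv⟩ => ⟨hρ, a, ha, hv⟩, fun ⟨hρ, a, ha, hv⟩ => ⟨a, ha, hρ, hv⟩⟩

lemma mem_biUnion_mPV' {τ ρ : Finset V} :
    ρ ∈ τ.biUnion (mPV' Δ) ↔ (ρ ∈ facets Δ ∨ IsRidge Δ ρ) ∧ ¬ τ ⊆ ρ := by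
  simp only [Finset.mem_biUnion, mem_mPV', Finset.not_subset]
  exact ⟨fun ⟨a, ha, hρ, hv⟩ => ⟨hρ, a, ha, hv⟩, fun ⟨hρ, a, ha, hv⟩ => ⟨a, ha, hρ, hv⟩⟩

lemma biUnion_mPV_eq_iff {τ σ : Finset V} :
    τ.biUnion (mPV Δ) = σ.biUnion (mPV Δ) ↔ ∀ ρ ∈ Δ, (τ ⊆ ρ ↔ σ ⊆ ρ) := by
  simp only [Finset.ext_iff, mem_biUnion_mPV]
  exact forall_congr' fun ρ => by tauto

lemma biUnion_mPV'_eq_iff {τ σ : Finset V} :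
    τ.biUnion (mPV' Δ) = σ.biUnion (mPV' Δ) ↔
      ∀ ρ, ρ ∈ facets Δ ∨ IsRidge Δ ρ → (τ ⊆ ρ ↔ σ ⊆ ρ) := by
  simp only [Finset.ext_iff, mem_biUnion_mPV']
  exact forall_congr' fun ρ => by tauto

lemma IsComplex.biUnion_mPV'_eq_iff_biUnion_mPV_eq (hΔ : IsComplex Δ) {τ σ : Finset V} :
    τ.biUnion (mPV' Δ) = σ.biUnion (mPV' Δ) ↔ τ.biUnion (mPV Δ) = σ.biUnion (mPV Δ) := by
  rw [biUnion_mPV'_eq_iff, biUnion_mPV_eq_iff]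
  refine ⟨fun h ρ hρ => ⟨fun hτ => ?_, fun hσ => ?_⟩, fun h ρ hρ => h ρ ?_⟩
  · exact hΔ.subset_of_forall_facet_or_ridge (fun ρ' hρ' => (h ρ' hρ').1) hρ hτ
  · exact hΔ.subset_of_forall_facet_or_ridge (fun ρ' hρ' => (h ρ' hρ').2) hρ hσ
  · exact hρ.elim mem_of_mem_facets hΔ.mem_of_isRidge

end

theorem scarf_of_JPV'_general {n : ℕ} (Δ : Finset (Finset (Fin n)))
    (hΔ : IsComplex Δ)
    (hScarfJ : ∀ σ : Finset (Fin n), σ.Nonempty →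
      (σ ∈ Δ ↔ ∀ τ : Finset (Fin n), τ ≠ σ →
        τ.biUnion (mPV Δ) ≠ σ.biUnion (mPV Δ))) :
    ∀ σ : Finset (Fin n), σ.Nonempty →
      (σ ∈ Δ ↔ ∀ τ : Finset (Fin n), τ ≠ σ →
        τ.biUnion (mPV' Δ) ≠ σ.biUnion (mPV' Δ)) := by
  intro σ hσ
  simp only [hScarfJ σ hσ, ne_eq, hΔ.biUnion_mPV'_eq_iff_biUnion_mPV_eq]

/-- If `Δ` is a simplicial complex on `n` vertices (each lying on
a face) which is not the boundary of a simplex, then `Δ` is the Scarf complex of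
`J'_Δ = (m'_1, …, m'_n)`: the nonempty faces of `Δ` are exactly the subsets of
`{1, …, n}` whose lcm of `m'`-labels differs from that of every other subset.
Assumed as known (Peeva–Velasco, hypothesis `hScarfJ`): `Δ` is the Scarf complex
of `J_Δ = (m_1, …, m_n)`. -/
theorem scarf_of_JPV' {n : ℕ} (Δ : Finset (Finset (Fin n)))
    (hΔ : IsComplex Δ) (hvtx : ∀ v : Fin n, ({v} : Finset (Fin n)) ∈ Δ)
    (hnb : ¬ IsBoundaryOfFullSimplex Δ)
    (hScarfJ : ∀ σ : Finset (Fin n), σ.Nonempty →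
      (σ ∈ Δ ↔ ∀ τ : Finset (Fin n), τ ≠ σ →
        τ.biUnion (mPV Δ) ≠ σ.biUnion (mPV Δ))) :
    ∀ σ : Finset (Fin n), σ.Nonempty →
      (σ ∈ Δ ↔ ∀ τ : Finset (Fin n), τ ≠ σ →
        τ.biUnion (mPV' Δ) ≠ σ.biUnion (mPV' Δ)) :=
  scarf_of_JPV'_general Δ hΔ hScarfJ
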